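/- arXiv:1910.13237 — 5 statements merged into one kernel-verified Lean document; each statement's English description precedes it below -/
import Mathlib

section
/- If a capacity-constrained choice rule satisfies capacity-filling, monotonicity, and the capacity-wise weak axiom of revealed preference (CWARP), then it also satisfies the irrelevance of accepted alternatives. -/
open Finset

variable {α : Type*} [Fintype α] [DecidableEq α]

/-- The set of rejected alternatives `R(S,q) = S \ C(S,q)`. -/
def Rej (C : Finset α → ℕ → Finset α) (S : Finset α) (q : ℕ) : Finset α := S \ C S q

/-- A capacity-constrained choice rule chooses a subset of `S` of cardinality at most `q`. -/
def ValidRule (C : Finset α → ℕ → Finset α) : Prop :=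
  ∀ S : Finset α, ∀ q : ℕ, S.Nonempty → 1 ≤ q → q ≤ Fintype.card α →
    C S q ⊆ S ∧ (C S q).card ≤ q

/-- Capacity-filling: `|C(S,q)| = min {|S|, q}`. -/
def CapacityFilling (C : Finset α → ℕ → Finset α) : Prop :=
  ∀ S : Finset α, ∀ q : ℕ, S.Nonempty → 1 ≤ q → q ≤ Fintype.card α →
    (C S q).card = min S.card q

/-- Monotonicity: `C(S,q) ⊆ C(S,q+1)`. -/
def ChoiceMonotone (C : Finset α → ℕ → Finset α) : Prop :=
  ∀ S : Finset α, ∀ q : ℕ, S.Nonempty → 1 ≤ q → q < Fintype.card α →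
    C S q ⊆ C S (q + 1)

/-- Gross substitutes: if `a ∈ C(S,q)` then `a ∈ C(S \ {b}, q)` for `b ≠ a`. -/
def GrossSubstitutes (C : Finset α → ℕ → Finset α) : Prop :=
  ∀ S : Finset α, ∀ q : ℕ, ∀ a b : α, S.Nonempty → 1 ≤ q → q ≤ Fintype.card α →
    a ∈ S → b ∈ S → a ≠ b → a ∈ C S q → a ∈ C (S.erase b) q

/-- Irrelevance of accepted alternatives. -/
def IrrelevanceOfAcceptedAlternatives (C : Finset α → ℕ → Finset α) : Prop :=
  ∀ S S' : Finset α, ∀ q : ℕ, S.Nonempty → S'.Nonempty → 1 ≤ q → q < Fintype.card α →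
    Rej C S q = Rej C S' q →
    C S (q + 1) ∩ Rej C S q = C S' (q + 1) ∩ Rej C S' q

/-- `a` is revealed preferred to `b` at capacity `q`. -/
def RevealedPref (C : Finset α → ℕ → Finset α) (q : ℕ) (a b : α) : Prop :=
  ∃ S : Finset α, S.Nonempty ∧ a ∉ C S (q - 1) ∧ b ∉ C S (q - 1) ∧
    a ∈ C S q ∧ b ∈ Rej C S q

/-- Capacity-wise weak axiom of revealed preference. -/
def CWARP (C : Finset α → ℕ → Finset α) : Prop :=
  ∀ q : ℕ, 1 < q → q ≤ Fintype.card α →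
    ∀ a b : α, RevealedPref C q a b → ¬ RevealedPref C q b a

/-- Lexicographic choice: iteratively pick, for `i = 1, …, q`, the `π i`-maximal
remaining alternative of `S`, stopping when none remain. -/
def lexChoice (π : ℕ → LinearOrder α) (S : Finset α) : ℕ → Finset α
  | 0 => ∅
  | q + 1 =>
      let T := lexChoice π S q
      if h : (S \ T).Nonempty then insert (@Finset.max' α (π q) (S \ T) h) T else T

/-- `C` is (capacity-constrained) lexicographic for the priority profile `π`. -/
def IsLexFor (C : Finset α → ℕ → Finset α) (π : ℕ → LinearOrder α) : Prop :=
  ∀ S : Finset α, ∀ q : ℕ, S.Nonempty → 1 ≤ q → q ≤ Fintype.card α →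
    C S q = lexChoice π S q

/-- `C` is (capacity-constrained) lexicographic. -/
def IsLex (C : Finset α → ℕ → Finset α) : Prop :=
  ∃ π : ℕ → LinearOrder α, IsLexFor C π

lemma step_aux (C : Finset α → ℕ → Finset α) (hC : ValidRule C)
    (h1 : CapacityFilling C) (h2 : ChoiceMonotone C)
    (S : Finset α) (q : ℕ) (hS : S.Nonempty) (hq : 1 ≤ q)
    (hqlt : q < Fintype.card α) (hcard : q < S.card) :
    ∃ a, a ∈ Rej C S q ∧ C S (q+1) = insert a (C S q) ∧
      C S (q+1) ∩ Rej C S q = {a} := by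
  have hsub : C S q ⊆ C S (q+1) := h2 S q hS hq hqlt
  have hc1 : (C S q).card = q := by
    rw [h1 S q hS hq hqlt.le]; exact min_eq_right hcard.le
  have hc2 : (C S (q+1)).card = q+1 := by
    rw [h1 S (q+1) hS (by omega) hqlt]; exact min_eq_right hcard
  have hsd : (C S (q+1) \ C S q).card = 1 := by
    rw [card_sdiff_of_subset hsub, hc1, hc2]; omega
  obtain ⟨a, ha⟩ := Finset.card_eq_one.mp hsd
  have hamem : a ∈ C S (q+1) \ C S q := ha ▸ Finset.mem_singleton_self a
  have haC1 : a ∈ C S (q+1) := (Finset.mem_sdiff.mp hamem).1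
  have haC0 : a ∉ C S q := (Finset.mem_sdiff.mp hamem).2
  have haS : a ∈ S := (hC S (q+1) hS (by omega) hqlt).1 haC1
  have hins : C S (q+1) = insert a (C S q) := by
    have := Finset.sdiff_union_of_subset hsub
    rw [ha] at this
    rw [← this]; ext x; simp [Finset.mem_insert, or_comm]
  refine ⟨a, Finset.mem_sdiff.mpr ⟨haS, haC0⟩, hins, ?_⟩
  ext x
  simp only [Rej, Finset.mem_inter, Finset.mem_sdiff, Finset.mem_singleton, hins,
    Finset.mem_insert]
  constructor
  · rintro ⟨h | h, _, hx⟩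
    · exact h
    · exact absurd h hx
  · rintro rfl
    exact ⟨Or.inl rfl, haS, haC0⟩

theorem capacityFilling_monotone_cwarp_imp_iaa [Nonempty α]
    (C : Finset α → ℕ → Finset α) (hC : ValidRule C)
    (h1 : CapacityFilling C) (h2 : ChoiceMonotone C) (h3 : CWARP C) :
    IrrelevanceOfAcceptedAlternatives C := by
  intro S S' q hS hS' hq hqlt hR
  by_cases hRe : Rej C S q = ∅
  · have hRe' : Rej C S' q = ∅ := hR ▸ hRe
    rw [hRe, hRe', Finset.inter_empty, Finset.inter_empty]
  · have hRne : (Rej C S q).Nonempty := Finset.nonempty_iff_ne_empty.mpr hRe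
    have hRne' : (Rej C S' q).Nonempty := hR ▸ hRne
    -- q < S.card
    have hcardS : q < S.card := by
      obtain ⟨x, hx⟩ := hRne
      rw [Rej, Finset.mem_sdiff] at hx
      have hss : C S q ⊂ S := ⟨(hC S q hS hq hqlt.le).1, fun h => hx.2 (h hx.1)⟩
      have := Finset.card_lt_card hss
      have h1' := h1 S q hS hq hqlt.le
      omega
    have hcardS' : q < S'.card := by
      obtain ⟨x, hx⟩ := hRne'
      rw [Rej, Finset.mem_sdiff] at hx
      have hss : C S' q ⊂ S' := ⟨(hC S' q hS' hq hqlt.le).1, fun h => hx.2 (h hx.1)⟩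
      have := Finset.card_lt_card hss
      have h1' := h1 S' q hS' hq hqlt.le
      omega
    obtain ⟨a, haR, hins, hcap⟩ := step_aux C hC h1 h2 S q hS hq hqlt hcardS
    obtain ⟨b, hbR, hins', hcap'⟩ := step_aux C hC h1 h2 S' q hS' hq hqlt hcardS'
    rw [hcap, hcap']
    by_cases hab : a = b
    · rw [hab]
    · exfalso
      have haR' : a ∈ Rej C S' q := hR ▸ haR
      have hbRS : b ∈ Rej C S q := hR ▸ hbR
      have haS : a ∈ S := (Finset.mem_sdiff.mp haR).1
      have haC0 : a ∉ C S q := (Finset.mem_sdiff.mp haR).2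
      have hbS : b ∈ S := (Finset.mem_sdiff.mp hbRS).1
      have hbC0 : b ∉ C S q := (Finset.mem_sdiff.mp hbRS).2
      have haS' : a ∈ S' := (Finset.mem_sdiff.mp haR').1
      have haC0' : a ∉ C S' q := (Finset.mem_sdiff.mp haR').2
      have hbS' : b ∈ S' := (Finset.mem_sdiff.mp hbR).1
      have hbC0' : b ∉ C S' q := (Finset.mem_sdiff.mp hbR).2
      have hrp1 : RevealedPref C (q+1) a b := by
        refine ⟨S, hS, ?_, ?_, ?_, ?_⟩
        · simpa using haC0
        · simpa using hbC0
        · rw [hins]; exact Finset.mem_insert_self a _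
        · rw [Rej, Finset.mem_sdiff, hins, Finset.mem_insert]
          exact ⟨hbS, by tauto⟩
      have hrp2 : RevealedPref C (q+1) b a := by
        refine ⟨S', hS', ?_, ?_, ?_, ?_⟩
        · simpa using hbC0'
        · simpa using haC0'
        · rw [hins']; exact Finset.mem_insert_self b _
        · rw [Rej, Finset.mem_sdiff, hins', Finset.mem_insert]
          exact ⟨haS', by tauto⟩
      exact h3 (q+1) (by omega) hqlt a b hrp1 hrp2
end

section
/- A capacity-constrained choice rule is lexicographic (i.e., there exists a list of n linear orders (≻₁,...,≻ₙ) on A such that for each problem (S,q), C(S,q) is obtained by iteratively choosing the ≻₁-maximal element of S, then the ≻₂-maximal element of the remainder, and so on until q alternatives are chosen or none remain) if and only if it satisfies capacity-filling, gross substitutes, monotonicity, and the irrelevance of accepted alternatives. -/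
open Finset

variable {α : Type*} [Fintype α] [DecidableEq α]

lemma lexChoice_subset (π : ℕ → LinearOrder α) (S : Finset α) : ∀ q, lexChoice π S q ⊆ S := by
  intro q
  induction q with
  | zero => simp [lexChoice]
  | succ q ih =>
    rw [lexChoice]
    split
    · next h =>
      exact insert_subset (sdiff_subset (@Finset.max'_mem α (π q) _ h)) ih
    · exact ih

lemma lexChoice_card (π : ℕ → LinearOrder α) (S : Finset α) :
    ∀ q, (lexChoice π S q).card = min S.card q := by
  intro q
  induction q with
  | zero => simp [lexChoice]
  | succ q ih =>
    rw [lexChoice]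
    split
    · next h =>
      have hm := @Finset.max'_mem α (π q) _ h
      have hnot : @Finset.max' α (π q) (S \ lexChoice π S q) h ∉ lexChoice π S q :=
        (Finset.mem_sdiff.1 hm).2
      rw [Finset.card_insert_of_notMem hnot, ih]
      have hlt : (lexChoice π S q).card < S.card :=
        Finset.card_lt_card ⟨lexChoice_subset π S q, fun hsub => (Finset.mem_sdiff.1 hm).2 (hsub (Finset.mem_sdiff.1 hm).1)⟩
      rw [ih] at hlt
      have hq : min S.card q = q := by omega
      have : q + 1 ≤ S.card := by omega
      omega
    · next h =>
      have : S ⊆ lexChoice π S q := by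
        intro x hx
        by_contra hxn
        exact h ⟨x, Finset.mem_sdiff.2 ⟨hx, hxn⟩⟩
      have heq : lexChoice π S q = S := Finset.Subset.antisymm (lexChoice_subset π S q) this
      rw [heq] at ih ⊢
      omega

lemma lexChoice_mono (π : ℕ → LinearOrder α) (S : Finset α) (q : ℕ) :
    lexChoice π S q ⊆ lexChoice π S (q + 1) := by
  rw [lexChoice]
  split
  · exact Finset.subset_insert _ _
  · exact Finset.Subset.refl _

lemma lexChoice_succ_inter (π : ℕ → LinearOrder α) (S : Finset α) (q : ℕ) :
    lexChoice π S (q+1) ∩ (S \ lexChoice π S q) =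
      if h : (S \ lexChoice π S q).Nonempty
        then {@Finset.max' α (π q) (S \ lexChoice π S q) h} else ∅ := by
  rw [lexChoice]
  split
  · next h =>
    ext x
    simp only [Finset.mem_inter, Finset.mem_insert, Finset.mem_sdiff, Finset.mem_singleton]
    constructor
    · rintro ⟨hx | hx, hxS, hxn⟩
      · exact hx
      · exact absurd hx hxn
    · rintro rfl
      have := @Finset.max'_mem α (π q) _ h
      rw [Finset.mem_sdiff] at this
      exact ⟨Or.inl rfl, this.1, this.2⟩
  · next h =>
    ext x
    simp only [Finset.mem_inter, Finset.mem_sdiff, Finset.notMem_empty, iff_false]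
    rintro ⟨hx, _, hxn⟩
    exact hxn hx

lemma max'_erase_eq (L : LinearOrder α) (X : Finset α) (hX : X.Nonempty) (e : α)
    (hne : @Finset.max' α L X hX ≠ e) :
    ∃ h : (X.erase e).Nonempty, @Finset.max' α L (X.erase e) h = @Finset.max' α L X hX := by
  letI := L
  have hmem : X.max' hX ∈ X.erase e := Finset.mem_erase.2 ⟨hne, Finset.max'_mem _ _⟩
  refine ⟨⟨_, hmem⟩, le_antisymm ?_ ?_⟩
  · exact Finset.max'_le _ _ _ fun y hy => Finset.le_max' X y (Finset.mem_of_mem_erase hy)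
  · exact Finset.le_max' _ _ hmem

lemma max'_eq_of_eq (L : LinearOrder α) {X Y : Finset α} (hX : X.Nonempty) (hY : Y.Nonempty)
    (h : X = Y) : @Finset.max' α L X hX = @Finset.max' α L Y hY := by
  subst h; rfl

lemma lexChoice_erase (π : ℕ → LinearOrder α) (S : Finset α) (b : α) :
    ∀ q, (b ∉ lexChoice π S q ∧ lexChoice π (S.erase b) q = lexChoice π S q)
      ∨ (b ∈ lexChoice π S q ∧ ∃ e, e ∈ S ∧ e ∉ lexChoice π S q ∧ e ≠ b ∧
            lexChoice π (S.erase b) q = insert e ((lexChoice π S q).erase b) ∧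
            (S.erase b) \ lexChoice π (S.erase b) q = (S \ lexChoice π S q).erase e)
      ∨ (b ∈ lexChoice π S q ∧ lexChoice π (S.erase b) q = (lexChoice π S q).erase b ∧
            S \ lexChoice π S q = ∅) := by
  intro q
  induction q with
  | zero => left; simp [lexChoice]
  | succ q ih =>
    have unfoldS : lexChoice π S (q+1) =
        if h : (S \ lexChoice π S q).Nonempty
          then insert (@Finset.max' α (π q) (S \ lexChoice π S q) h) (lexChoice π S q)
          else lexChoice π S q := rfl
    have unfoldE : lexChoice π (S.erase b) (q+1) =
        if h : ((S.erase b) \ lexChoice π (S.erase b) q).Nonempty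
          then insert (@Finset.max' α (π q) ((S.erase b) \ lexChoice π (S.erase b) q) h)
            (lexChoice π (S.erase b) q)
          else lexChoice π (S.erase b) q := rfl
    generalize hT : lexChoice π S q = T at *
    generalize hT'g : lexChoice π (S.erase b) q = T' at *
    rcases ih with ⟨hbT, hTT⟩ | ⟨hbT, e, heS, heT, heb, hTT, hrem⟩ | ⟨hbT, hTT, hST⟩
    · -- case 1 : b not yet chosen, runs identical
      have hrem1 : (S.erase b) \ T' = (S \ T).erase b := by
        rw [hTT, Finset.erase_sdiff_comm]
      by_cases hS : (S \ T).Nonempty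
      · by_cases hmb : @Finset.max' α (π q) (S \ T) hS ≠ b
        · -- the maximum survives the removal of b
          obtain ⟨hne, hmax⟩ := max'_erase_eq (π q) (S \ T) hS b hmb
          have hne' : ((S.erase b) \ T').Nonempty := by rw [hrem1]; exact hne
          left
          constructor
          · rw [unfoldS, dif_pos hS]
            simp only [Finset.mem_insert]
            rintro (h | h)
            · exact hmb h.symm
            · exact hbT h
          · rw [unfoldS, dif_pos hS, unfoldE, dif_pos hne',
              max'_eq_of_eq (π q) hne' hne hrem1, hmax, hTT]
        · -- the maximum is b itself : b gets chosen now
          push_neg at hmb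
          have hlexS : lexChoice π S (q+1) = insert b T := by
            rw [unfoldS, dif_pos hS, hmb]
          by_cases hX : ((S \ T).erase b).Nonempty
          · have hne' : ((S.erase b) \ T').Nonempty := by rw [hrem1]; exact hX
            have heX : @Finset.max' α (π q) _ hX ∈ (S \ T).erase b :=
              @Finset.max'_mem α (π q) _ hX
            have heb2 : @Finset.max' α (π q) _ hX ≠ b := (Finset.mem_erase.1 heX).1
            have heST : @Finset.max' α (π q) _ hX ∈ S \ T := Finset.mem_of_mem_erase heX
            right; left
            refine ⟨by rw [hlexS]; exact Finset.mem_insert_self _ _,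
              @Finset.max' α (π q) _ hX, (Finset.mem_sdiff.1 heST).1, ?_, heb2, ?_, ?_⟩
            · rw [hlexS]
              simp only [Finset.mem_insert]
              rintro (h | h)
              · exact heb2 h
              · exact (Finset.mem_sdiff.1 heST).2 h
            · rw [unfoldE, dif_pos hne', max'_eq_of_eq (π q) hne' hX hrem1, hTT, hlexS,
                Finset.erase_insert hbT]
            · rw [unfoldE, dif_pos hne', Finset.sdiff_insert,
                max'_eq_of_eq (π q) hne' hX hrem1, hrem1, hlexS, Finset.sdiff_insert]
          · right; right
            have hne' : ¬((S.erase b) \ T').Nonempty := by rw [hrem1]; exact hX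
            refine ⟨by rw [hlexS]; exact Finset.mem_insert_self _ _, ?_, ?_⟩
            · rw [unfoldE, dif_neg hne', hlexS, Finset.erase_insert hbT, hTT]
            · rw [hlexS, Finset.sdiff_insert]
              exact Finset.not_nonempty_iff_eq_empty.1 hX
      · -- S \ T empty : both runs stall
        left
        have hne' : ¬((S.erase b) \ T').Nonempty := by
          rw [hrem1]
          rintro ⟨x, hx⟩
          exact hS ⟨x, Finset.mem_of_mem_erase hx⟩
        rw [unfoldS, dif_neg hS, unfoldE, dif_neg hne']
        exact ⟨hbT, hTT⟩
    · -- case 2 : b already chosen, extra element e in its place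
      have hS : (S \ T).Nonempty := ⟨e, Finset.mem_sdiff.2 ⟨heS, heT⟩⟩
      have hmS : @Finset.max' α (π q) (S \ T) hS ∈ S \ T := @Finset.max'_mem α (π q) _ hS
      have hmT : @Finset.max' α (π q) (S \ T) hS ∉ T := (Finset.mem_sdiff.1 hmS).2
      have hmb : @Finset.max' α (π q) (S \ T) hS ≠ b := fun h => hmT (h ▸ hbT)
      have hlexS : lexChoice π S (q+1) = insert (@Finset.max' α (π q) (S \ T) hS) T := by
        rw [unfoldS, dif_pos hS]
      by_cases hme : @Finset.max' α (π q) (S \ T) hS ≠ e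
      · obtain ⟨hne, hmax⟩ := max'_erase_eq (π q) (S \ T) hS e hme
        have hne' : ((S.erase b) \ T').Nonempty := by rw [hrem]; exact hne
        right; left
        refine ⟨by rw [hlexS]; exact Finset.mem_insert_of_mem hbT, e, heS, ?_, heb, ?_, ?_⟩
        · rw [hlexS]
          simp only [Finset.mem_insert]
          rintro (h | h)
          · exact hme h.symm
          · exact heT h
        · rw [unfoldE, dif_pos hne', max'_eq_of_eq (π q) hne' hne hrem, hmax, hTT, hlexS,
            Finset.erase_insert_of_ne hmb, Finset.insert_comm]
        · rw [unfoldE, dif_pos hne', Finset.sdiff_insert,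
            max'_eq_of_eq (π q) hne' hne hrem, hmax, hrem, hlexS, Finset.sdiff_insert,
            Finset.erase_right_comm]
      · push_neg at hme
        have hlexS' : lexChoice π S (q+1) = insert e T := by rw [hlexS, hme]
        by_cases hX : ((S \ T).erase e).Nonempty
        · have hne' : ((S.erase b) \ T').Nonempty := by rw [hrem]; exact hX
          have he'X : @Finset.max' α (π q) _ hX ∈ (S \ T).erase e :=
            @Finset.max'_mem α (π q) _ hX
          have he'e : @Finset.max' α (π q) _ hX ≠ e := (Finset.mem_erase.1 he'X).1
          have he'ST : @Finset.max' α (π q) _ hX ∈ S \ T := Finset.mem_of_mem_erase he'X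
          have he'T : @Finset.max' α (π q) _ hX ∉ T := (Finset.mem_sdiff.1 he'ST).2
          have he'b : @Finset.max' α (π q) _ hX ≠ b := fun h => he'T (h ▸ hbT)
          right; left
          refine ⟨by rw [hlexS']; exact Finset.mem_insert_of_mem hbT,
            @Finset.max' α (π q) _ hX, (Finset.mem_sdiff.1 he'ST).1, ?_, he'b, ?_, ?_⟩
          · rw [hlexS']
            simp only [Finset.mem_insert]
            rintro (h | h)
            · exact he'e h
            · exact he'T h
          · rw [unfoldE, dif_pos hne', max'_eq_of_eq (π q) hne' hX hrem, hTT, hlexS',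
              Finset.erase_insert_of_ne heb]
          · rw [unfoldE, dif_pos hne', Finset.sdiff_insert,
              max'_eq_of_eq (π q) hne' hX hrem, hrem, hlexS', Finset.sdiff_insert]
        · right; right
          have hne' : ¬((S.erase b) \ T').Nonempty := by rw [hrem]; exact hX
          refine ⟨by rw [hlexS']; exact Finset.mem_insert_of_mem hbT, ?_, ?_⟩
          · rw [unfoldE, dif_neg hne', hlexS', Finset.erase_insert_of_ne heb, hTT]
          · rw [hlexS', Finset.sdiff_insert]
            exact Finset.not_nonempty_iff_eq_empty.1 hX
    · -- case 3 : run exhausted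
      have hS : ¬(S \ T).Nonempty := by rw [hST]; exact Finset.not_nonempty_empty
      have hrem3 : (S.erase b) \ T' = ∅ := by
        rw [hTT]
        apply Finset.eq_empty_of_forall_notMem
        intro x hx
        rw [Finset.mem_sdiff, Finset.mem_erase, Finset.mem_erase] at hx
        have : x ∈ S \ T := Finset.mem_sdiff.2 ⟨hx.1.2, fun hxT => hx.2 ⟨hx.1.1, hxT⟩⟩
        rw [hST] at this
        exact absurd this (Finset.notMem_empty x)
      have hne' : ¬((S.erase b) \ T').Nonempty := by
        rw [hrem3]; exact Finset.not_nonempty_empty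
      right; right
      rw [unfoldS, dif_neg hS, unfoldE, dif_neg hne']
      exact ⟨hbT, hTT, hST⟩

lemma isLexFor_axioms (C : Finset α → ℕ → Finset α) (π : ℕ → LinearOrder α)
    (h : IsLexFor C π) :
    CapacityFilling C ∧ GrossSubstitutes C ∧ ChoiceMonotone C ∧
      IrrelevanceOfAcceptedAlternatives C := by
  refine ⟨?_, ?_, ?_, ?_⟩
  · intro S q hS hq hqn
    rw [h S q hS hq hqn, lexChoice_card]
  · intro S q a b hS hq hqn haS hbS hab haC
    have hab' : a ∈ S.erase b := Finset.mem_erase.2 ⟨hab, haS⟩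
    rw [h S q hS hq hqn] at haC
    rw [h (S.erase b) q ⟨a, hab'⟩ hq hqn]
    rcases lexChoice_erase π S b q with ⟨_, hE⟩ | ⟨_, e, _, _, _, hE, _⟩ | ⟨_, hE, _⟩ <;>
      rw [hE]
    · exact haC
    · exact Finset.mem_insert_of_mem (Finset.mem_erase.2 ⟨hab, haC⟩)
    · exact Finset.mem_erase.2 ⟨hab, haC⟩
  · intro S q hS hq hqn
    rw [h S q hS hq (Nat.le_of_lt hqn), h S (q+1) hS (by omega) hqn]
    exact lexChoice_mono π S q
  · intro S S' q hS hS' hq hqn hR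
    simp only [Rej] at hR ⊢
    rw [h S q hS hq (Nat.le_of_lt hqn), h S' q hS' hq (Nat.le_of_lt hqn)] at hR ⊢
    rw [h S (q+1) hS (by omega) hqn, h S' (q+1) hS' (by omega) hqn]
    rw [lexChoice_succ_inter, lexChoice_succ_inter]
    by_cases hne : (S \ lexChoice π S q).Nonempty
    · have hne' : (S' \ lexChoice π S' q).Nonempty := hR ▸ hne
      rw [dif_pos hne, dif_pos hne', max'_eq_of_eq (π q) hne hne' hR]
    · have hne' : ¬(S' \ lexChoice π S' q).Nonempty := by rw [← hR]; exact hne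
      rw [dif_neg hne, dif_neg hne']


lemma choice_persist (C : Finset α → ℕ → Finset α) (hGS : GrossSubstitutes C)
    {q : ℕ} (hq1 : 1 ≤ q) (hqn : q ≤ Fintype.card α) :
    ∀ (k : ℕ) (S F : Finset α) (a : α), (S \ F).card = k → F ⊆ S → a ∈ F →
      a ∈ C S q → a ∈ C F q := by
  intro k
  induction k with
  | zero =>
    intro S F a hk hFS haF haC
    have : S \ F = ∅ := Finset.card_eq_zero.1 hk
    have hSF : S ⊆ F := by
      intro x hx
      by_contra hxF
      exact absurd (Finset.mem_sdiff.2 ⟨hx, hxF⟩) (by rw [this]; exact Finset.notMem_empty x)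
    have : F = S := Finset.Subset.antisymm hFS hSF
    rwa [this]
  | succ k ih =>
    intro S F a hk hFS haF haC
    have hne : (S \ F).Nonempty := Finset.card_pos.1 (by omega)
    obtain ⟨d, hd⟩ := hne
    have hdS : d ∈ S := (Finset.mem_sdiff.1 hd).1
    have hdF : d ∉ F := (Finset.mem_sdiff.1 hd).2
    have had : a ≠ d := fun h => hdF (h ▸ haF)
    have h1 : a ∈ C (S.erase d) q :=
      hGS S q a d ⟨a, hFS haF⟩ hq1 hqn (hFS haF) hdS had haC
    refine ih (S.erase d) F a ?_ ?_ haF h1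
    · rw [Finset.erase_sdiff_comm, Finset.card_erase_of_mem hd, hk]
      omega
    · intro x hx
      exact Finset.mem_erase.2 ⟨fun h => hdF (h ▸ hx), hFS hx⟩

lemma card_choice_of_rej (C : Finset α → ℕ → Finset α) (hC : ValidRule C)
    (hCF : CapacityFilling C) {S : Finset α} {q : ℕ} {d : α}
    (hq1 : 1 ≤ q) (hqn : q ≤ Fintype.card α) (hS : S.Nonempty)
    (hd : d ∈ S) (hdC : d ∉ C S q) : (C S q).card = q ∧ q < S.card := by
  have hsub := (hC S q hS hq1 hqn).1
  have hcard := hCF S q hS hq1 hqn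
  have hlt : (C S q).card < S.card :=
    Finset.card_lt_card ⟨hsub, fun h => hdC (h hd)⟩
  omega

lemma choice_shrink (C : Finset α → ℕ → Finset α) (hC : ValidRule C)
    (hCF : CapacityFilling C) (hGS : GrossSubstitutes C)
    {q : ℕ} (hq1 : 1 ≤ q) (hqn : q ≤ Fintype.card α) :
    ∀ (k : ℕ) (S F : Finset α), (S \ F).card = k → F ⊆ S → S.Nonempty →
      C S q ⊆ F → C F q = C S q := by
  intro k
  induction k with
  | zero =>
    intro S F hk hFS hS hCS
    have : S \ F = ∅ := Finset.card_eq_zero.1 hk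
    have hSF : S ⊆ F := by
      intro x hx
      by_contra hxF
      exact absurd (Finset.mem_sdiff.2 ⟨hx, hxF⟩) (by rw [this]; exact Finset.notMem_empty x)
    rw [Finset.Subset.antisymm hFS hSF]
  | succ k ih =>
    intro S F hk hFS hS hCS
    have hne : (S \ F).Nonempty := Finset.card_pos.1 (by omega)
    obtain ⟨d, hd⟩ := hne
    have hdS : d ∈ S := (Finset.mem_sdiff.1 hd).1
    have hdF : d ∉ F := (Finset.mem_sdiff.1 hd).2
    have hdC : d ∉ C S q := fun h => hdF (hCS h)
    obtain ⟨hcq, hqlt⟩ := card_choice_of_rej C hC hCF hq1 hqn hS hdS hdC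
    have hsub : C S q ⊆ C (S.erase d) q := by
      intro x hx
      exact hGS S q x d hS hq1 hqn ((hC S q hS hq1 hqn).1 hx) hdS
        (fun h => hdF (h ▸ hCS hx)) hx
    have hFS' : F ⊆ S.erase d := fun x hx =>
      Finset.mem_erase.2 ⟨fun h => hdF (h ▸ hx), hFS hx⟩
    have hSd : (S.erase d).Nonempty := by
      obtain ⟨x, hx⟩ := Finset.card_pos.1 (by omega : 0 < (C S q).card)
      exact ⟨x, hFS' (hCS hx)⟩
    have hcard' : (C (S.erase d) q).card = q := by
      have := hCF (S.erase d) q hSd hq1 hqn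
      rw [Finset.card_erase_of_mem hdS] at this
      omega
    have heq : C (S.erase d) q = C S q :=
      (Finset.eq_of_subset_of_card_le hsub (by omega)).symm
    have := ih (S.erase d) F ?_ hFS' hSd (by rw [heq]; exact hCS)
    · rw [this, heq]
    · rw [Finset.erase_sdiff_comm, Finset.card_erase_of_mem hd, hk]
      omega


/-- The revealed priority at step `q+1` (for `q ≥ 1`). -/
def RelQ (C : Finset α → ℕ → Finset α) (q : ℕ) (a b : α) : Prop :=
  a ≠ b ∧ ∃ S : Finset α, a ∈ S ∧ b ∈ S ∧ a ∉ C S q ∧ b ∉ C S q ∧ a ∈ C S (q+1)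

/-- The revealed priority at step `1`. -/
def Rel0 (C : Finset α → ℕ → Finset α) (a b : α) : Prop :=
  a ≠ b ∧ a ∈ C {a, b} 1

/-- The revealed priority used for the `q`-th order of the profile. -/
def PRel (C : Finset α → ℕ → Finset α) (q : ℕ) : α → α → Prop :=
  if q = 0 then Rel0 C else RelQ C q

lemma rel0_asymm [Nonempty α] (C : Finset α → ℕ → Finset α) (hCF : CapacityFilling C)
    {a b : α} (h1 : Rel0 C a b) (h2 : Rel0 C b a) : False := by
  obtain ⟨hab, ha⟩ := h1
  obtain ⟨hba, hb⟩ := h2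
  rw [Finset.pair_comm b a] at hb
  have hcard : (C {a, b} 1).card = 1 := by
    have h := hCF {a,b} 1 ⟨a, by simp⟩ le_rfl Fintype.card_pos
    rw [Finset.card_pair hab] at h
    omega
  have hsub : ({a, b} : Finset α) ⊆ C {a, b} 1 :=
    Finset.insert_subset ha (Finset.singleton_subset_iff.2 hb)
  have := Finset.card_le_card hsub
  rw [Finset.card_pair hab] at this
  omega

lemma rel0_trans [Nonempty α] (C : Finset α → ℕ → Finset α) (hC : ValidRule C)
    (hCF : CapacityFilling C) (hGS : GrossSubstitutes C)
    {a b c : α} (h1 : Rel0 C a b) (h2 : Rel0 C b c) : Rel0 C a c := by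
  have hn : 1 ≤ Fintype.card α := Fintype.card_pos
  have hab := h1.1
  have hbc := h2.1
  by_cases hac : a = c
  · subst hac
    exact absurd h2 (fun h => rel0_asymm C hCF h1 h)
  have hT : ({a, b, c} : Finset α).Nonempty := ⟨a, by simp⟩
  have haT : a ∈ ({a, b, c} : Finset α) := by simp
  have hbT : b ∈ ({a, b, c} : Finset α) := by simp
  have hcT : c ∈ ({a, b, c} : Finset α) := by simp
  have hcard : (C {a, b, c} 1).card = 1 := by
    have := hCF {a,b,c} 1 hT le_rfl hn
    have hpos : 0 < ({a, b, c} : Finset α).card := Finset.card_pos.2 hT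
    omega
  obtain ⟨x, hx⟩ := Finset.card_eq_one.1 hcard
  have hxC : x ∈ C {a, b, c} 1 := by rw [hx]; exact Finset.mem_singleton_self x
  have hxT : x ∈ ({a, b, c} : Finset α) := (hC {a,b,c} 1 hT le_rfl hn).1 hxC
  have hEc : ({a, b, c} : Finset α).erase c = {a, b} := by
    ext y
    simp only [Finset.mem_erase, Finset.mem_insert, Finset.mem_singleton]
    constructor
    · rintro ⟨hyc, rfl | rfl | rfl⟩
      · exact Or.inl rfl
      · exact Or.inr rfl
      · exact absurd rfl hyc
    · rintro (rfl | rfl)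
      · exact ⟨hac, Or.inl rfl⟩
      · exact ⟨hbc, Or.inr (Or.inl rfl)⟩
  have hEa : ({a, b, c} : Finset α).erase a = {b, c} := by
    ext y
    simp only [Finset.mem_erase, Finset.mem_insert, Finset.mem_singleton]
    constructor
    · rintro ⟨hya, rfl | rfl | rfl⟩
      · exact absurd rfl hya
      · exact Or.inl rfl
      · exact Or.inr rfl
    · rintro (rfl | rfl)
      · exact ⟨Ne.symm hab, Or.inr (Or.inl rfl)⟩
      · exact ⟨Ne.symm hac, Or.inr (Or.inr rfl)⟩
  have hEb : ({a, b, c} : Finset α).erase b = {a, c} := by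
    ext y
    simp only [Finset.mem_erase, Finset.mem_insert, Finset.mem_singleton]
    constructor
    · rintro ⟨hyb, rfl | rfl | rfl⟩
      · exact Or.inl rfl
      · exact absurd rfl hyb
      · exact Or.inr rfl
    · rintro (rfl | rfl)
      · exact ⟨hab, Or.inl rfl⟩
      · exact ⟨Ne.symm hbc, Or.inr (Or.inr rfl)⟩
  rcases Finset.mem_insert.1 hxT with hxa | hx'
  · -- x = a : a is chosen from the triple
    subst hxa
    have : x ∈ C (({x, b, c} : Finset α).erase b) 1 :=
      hGS {x,b,c} 1 x b hT le_rfl hn haT hbT hab hxC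
    rw [hEb] at this
    exact ⟨hac, this⟩
  rcases Finset.mem_insert.1 hx' with hxb | hx''
  · -- x = b
    subst hxb
    have : x ∈ C (({a, x, c} : Finset α).erase c) 1 :=
      hGS {a,x,c} 1 x c hT le_rfl hn hbT hcT hbc hxC
    rw [hEc] at this
    have hba : Rel0 C x a := ⟨Ne.symm hab, by rwa [Finset.pair_comm x a]⟩
    exact absurd hba (fun h => rel0_asymm C hCF h1 h)
  · -- x = c
    rw [Finset.mem_singleton] at hx''
    subst hx''
    have : x ∈ C (({a, b, x} : Finset α).erase a) 1 :=
      hGS {a,b,x} 1 x a hT le_rfl hn hcT haT (Ne.symm hac) hxC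
    rw [hEa] at this
    have hcb : Rel0 C x b := ⟨Ne.symm hbc, by rwa [Finset.pair_comm x b]⟩
    exact absurd hcb (fun h => rel0_asymm C hCF h2 h)

lemma pair_union_sdiff {T P : Finset α} (hP : ∀ x ∈ P, x ∉ T) : (T ∪ P) \ T = P := by
  ext x
  simp only [Finset.mem_sdiff, Finset.mem_union]
  constructor
  · rintro ⟨h | h, hn⟩
    · exact absurd h hn
    · exact h
  · intro h
    exact ⟨Or.inr h, hP x h⟩

lemma choice_canonical (C : Finset α → ℕ → Finset α) (hC : ValidRule C)
    (hCF : CapacityFilling C) (hGS : GrossSubstitutes C) (hMon : ChoiceMonotone C)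
    {q : ℕ} (hq1 : 1 ≤ q) (hqn : q + 1 ≤ Fintype.card α) {S : Finset α} {a b : α}
    (hS : S.Nonempty) (haS : a ∈ S) (hbS : b ∈ S) (hab : a ≠ b)
    (haC : a ∉ C S q) (hbC : b ∉ C S q) (haC1 : a ∈ C S (q+1)) :
    C (C S q ∪ {a, b}) q = C S q ∧ C (C S q ∪ {a, b}) (q+1) = insert a (C S q) ∧
      (C S q).card = q := by
  have hqn' : q ≤ Fintype.card α := by omega
  obtain ⟨hcq, hqlt⟩ := card_choice_of_rej C hC hCF hq1 hqn' hS haS haC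
  have hFS : C S q ∪ {a, b} ⊆ S := by
    apply Finset.union_subset (hC S q hS hq1 hqn').1
    intro x hx
    rcases Finset.mem_insert.1 hx with rfl | hx
    · exact haS
    · rw [Finset.mem_singleton] at hx; exact hx ▸ hbS
  have hCSF : C S q ⊆ C S q ∪ {a, b} := Finset.subset_union_left
  have hFq : C (C S q ∪ {a, b}) q = C S q :=
    choice_shrink C hC hCF hGS hq1 hqn' _ S (C S q ∪ {a, b}) rfl hFS hS hCSF
  have haF : a ∈ C S q ∪ {a, b} := Finset.mem_union_right _ (Finset.mem_insert_self a {b})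
  have hbF : b ∈ C S q ∪ {a, b} := Finset.mem_union_right _ (by simp)
  have haF1 : a ∈ C (C S q ∪ {a, b}) (q+1) :=
    choice_persist C hGS (by omega) hqn _ S (C S q ∪ {a, b}) a rfl hFS haF haC1
  have hFne : (C S q ∪ {a, b}).Nonempty := ⟨a, haF⟩
  have hdisj : ∀ x ∈ ({a, b} : Finset α), x ∉ C S q := by
    intro x hx
    rcases Finset.mem_insert.1 hx with rfl | hx
    · exact haC
    · rw [Finset.mem_singleton] at hx; exact hx ▸ hbC
  have hFcard : (C S q ∪ {a, b}).card = q + 2 := by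
    rw [Finset.card_union_of_disjoint (Finset.disjoint_left.2 fun x h1 h2 => hdisj x h2 h1),
      hcq, Finset.card_pair hab]
  have hmono : C (C S q ∪ {a, b}) q ⊆ C (C S q ∪ {a, b}) (q+1) :=
    hMon _ q hFne hq1 (by omega)
  have hcard1 : (C (C S q ∪ {a, b}) (q+1)).card = q + 1 := by
    rw [hCF _ (q+1) hFne (by omega) hqn, hFcard]
    omega
  have hsub : insert a (C (C S q ∪ {a, b}) q) ⊆ C (C S q ∪ {a, b}) (q+1) :=
    Finset.insert_subset haF1 hmono
  have hnotmem : a ∉ C (C S q ∪ {a, b}) q := by rw [hFq]; exact haC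
  have heq := Finset.eq_of_subset_of_card_le hsub
    (by rw [hcard1, Finset.card_insert_of_notMem hnotmem, hFq, hcq])
  exact ⟨hFq, by rw [← heq, hFq], hcq⟩


lemma relQ_asymm (C : Finset α → ℕ → Finset α) (hC : ValidRule C) (hCF : CapacityFilling C)
    (hGS : GrossSubstitutes C) (hMon : ChoiceMonotone C)
    (hIAA : IrrelevanceOfAcceptedAlternatives C)
    {q : ℕ} (hq1 : 1 ≤ q) (hqn : q + 1 ≤ Fintype.card α)
    {a b : α} (h1 : RelQ C q a b) (h2 : RelQ C q b a) : False := by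
  obtain ⟨hab, S, haS, hbS, haC, hbC, haC1⟩ := h1
  obtain ⟨hba, S', hbS', haS', hbC', haC', hbC1⟩ := h2
  have hS : S.Nonempty := ⟨a, haS⟩
  have hS' : S'.Nonempty := ⟨b, hbS'⟩
  obtain ⟨e1, e2, -⟩ :=
    choice_canonical C hC hCF hGS hMon hq1 hqn hS haS hbS hab haC hbC haC1
  obtain ⟨e1', e2', -⟩ :=
    choice_canonical C hC hCF hGS hMon hq1 hqn hS' hbS' haS' hba hbC' haC' hbC1
  have hdj : ∀ x ∈ ({a, b} : Finset α), x ∉ C S q := by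
    intro x hx
    rcases Finset.mem_insert.1 hx with rfl | hx
    · exact haC
    · rw [Finset.mem_singleton] at hx; exact hx ▸ hbC
  have hdj' : ∀ x ∈ ({b, a} : Finset α), x ∉ C S' q := by
    intro x hx
    rcases Finset.mem_insert.1 hx with rfl | hx
    · exact hbC'
    · rw [Finset.mem_singleton] at hx; exact hx ▸ haC'
  have hR1 : Rej C (C S q ∪ {a, b}) q = {a, b} := by
    rw [Rej, e1]; exact pair_union_sdiff hdj
  have hR2 : Rej C (C S' q ∪ {b, a}) q = {b, a} := by
    rw [Rej, e1']; exact pair_union_sdiff hdj'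
  have hiaa := hIAA (C S q ∪ {a, b}) (C S' q ∪ {b, a}) q ⟨a, by simp⟩ ⟨b, by simp⟩ hq1
    (by omega) (by rw [hR1, hR2, Finset.pair_comm b a])
  have haL : a ∈ C (C S q ∪ {a, b}) (q+1) ∩ Rej C (C S q ∪ {a, b}) q := by
    rw [e2, hR1]
    exact Finset.mem_inter.2 ⟨Finset.mem_insert_self _ _, by simp⟩
  rw [hiaa] at haL
  have hmem := (Finset.mem_inter.1 haL).1
  rw [e2'] at hmem
  rcases Finset.mem_insert.1 hmem with h | h
  · exact hab h
  · exact haC' h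

lemma relQ_trans (C : Finset α → ℕ → Finset α) (hC : ValidRule C) (hCF : CapacityFilling C)
    (hGS : GrossSubstitutes C) (hMon : ChoiceMonotone C)
    (hIAA : IrrelevanceOfAcceptedAlternatives C)
    {q : ℕ} (hq1 : 1 ≤ q) (hqn : q + 1 ≤ Fintype.card α)
    {a b c : α} (h1 : RelQ C q a b) (h2 : RelQ C q b c) : RelQ C q a c := by
  have hqn' : q ≤ Fintype.card α := by omega
  have hab := h1.1
  have hbc := h2.1
  by_cases hac : a = c
  · subst hac
    exact absurd h2 (fun h => relQ_asymm C hC hCF hGS hMon hIAA hq1 hqn h1 h)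
  obtain ⟨-, S, haS, hbS, haC, hbC, haC1⟩ := h1
  obtain ⟨-, S', hbS', hcS', hbC', hcC', hbC1⟩ := h2
  have hS : S.Nonempty := ⟨a, haS⟩
  have hS' : S'.Nonempty := ⟨b, hbS'⟩
  obtain ⟨e1, e2, hc1⟩ :=
    choice_canonical C hC hCF hGS hMon hq1 hqn hS haS hbS hab haC hbC haC1
  obtain ⟨e1', e2', hc2⟩ :=
    choice_canonical C hC hCF hGS hMon hq1 hqn hS' hbS' hcS' hbc hbC' hcC' hbC1
  have haW : a ∈ (C S q ∪ C S' q) ∪ ({a, b, c} : Finset α) := by simp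
  have hbW : b ∈ (C S q ∪ C S' q) ∪ ({a, b, c} : Finset α) := by simp
  have hcW : c ∈ (C S q ∪ C S' q) ∪ ({a, b, c} : Finset α) := by simp
  have hWne : ((C S q ∪ C S' q) ∪ ({a, b, c} : Finset α)).Nonempty := ⟨a, haW⟩
  have hF1W : C S q ∪ {a, b} ⊆ (C S q ∪ C S' q) ∪ ({a, b, c} : Finset α) := by
    intro x hx
    simp only [Finset.mem_union, Finset.mem_insert, Finset.mem_singleton] at hx ⊢
    tauto
  have hF2W : C S' q ∪ {b, c} ⊆ (C S q ∪ C S' q) ∪ ({a, b, c} : Finset α) := by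
    intro x hx
    simp only [Finset.mem_union, Finset.mem_insert, Finset.mem_singleton] at hx ⊢
    tauto
  have haCW : a ∉ C ((C S q ∪ C S' q) ∪ ({a, b, c} : Finset α)) q := by
    intro h
    have := choice_persist C hGS hq1 hqn' _ _ (C S q ∪ {a, b}) a rfl hF1W (by simp) h
    rw [e1] at this
    exact haC this
  have hbCW : b ∉ C ((C S q ∪ C S' q) ∪ ({a, b, c} : Finset α)) q := by
    intro h
    have := choice_persist C hGS hq1 hqn' _ _ (C S q ∪ {a, b}) b rfl hF1W (by simp) h
    rw [e1] at this
    exact hbC this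
  have hcCW : c ∉ C ((C S q ∪ C S' q) ∪ ({a, b, c} : Finset α)) q := by
    intro h
    have := choice_persist C hGS hq1 hqn' _ _ (C S' q ∪ {b, c}) c rfl hF2W (by simp) h
    rw [e1'] at this
    exact hcC' this
  set W : Finset α := (C S q ∪ C S' q) ∪ ({a, b, c} : Finset α) with hWdef
  obtain ⟨hcW3, -⟩ := card_choice_of_rej C hC hCF hq1 hqn' hWne haW haCW
  have hCWsub : C W q ⊆ W := (hC W q hWne hq1 hqn').1
  have habc_sub : ∀ P : Finset α, P ⊆ ({a, b, c} : Finset α) → C (C W q ∪ P) q = C W q := by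
    intro P hP
    refine choice_shrink C hC hCF hGS hq1 hqn' _ W (C W q ∪ P) rfl ?_ hWne
      Finset.subset_union_left
    apply Finset.union_subset hCWsub
    intro x hx
    exact Finset.mem_union_right _ (hP hx)
  have hpab : ({a, b} : Finset α) ⊆ {a, b, c} := by intro x hx; simp at hx ⊢; tauto
  have hpbc : ({b, c} : Finset α) ⊆ {a, b, c} := by intro x hx; simp at hx ⊢; tauto
  have hpac : ({a, c} : Finset α) ⊆ {a, b, c} := by intro x hx; simp at hx ⊢; tauto
  have eDc := habc_sub {a, b} hpab
  have eDa := habc_sub {b, c} hpbc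
  have eDb := habc_sub {a, c} hpac
  have eWs := habc_sub {a, b, c} (Finset.Subset.refl _)
  have hdjab : ∀ x ∈ ({a, b} : Finset α), x ∉ C W q := by
    intro x hx
    rcases Finset.mem_insert.1 hx with rfl | hx
    · exact haCW
    · rw [Finset.mem_singleton] at hx; exact hx ▸ hbCW
  have hdjbc : ∀ x ∈ ({b, c} : Finset α), x ∉ C W q := by
    intro x hx
    rcases Finset.mem_insert.1 hx with rfl | hx
    · exact hbCW
    · rw [Finset.mem_singleton] at hx; exact hx ▸ hcCW
  have hdjac : ∀ x ∈ ({a, c} : Finset α), x ∉ C W q := by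
    intro x hx
    rcases Finset.mem_insert.1 hx with rfl | hx
    · exact haCW
    · rw [Finset.mem_singleton] at hx; exact hx ▸ hcCW
  have hdjabc : ∀ x ∈ ({a, b, c} : Finset α), x ∉ C W q := by
    intro x hx
    rcases Finset.mem_insert.1 hx with rfl | hx
    · exact haCW
    · exact hdjbc x hx
  have hRDc : Rej C (C W q ∪ {a, b}) q = {a, b} := by
    rw [Rej, eDc]; exact pair_union_sdiff hdjab
  have hRDa : Rej C (C W q ∪ {b, c}) q = {b, c} := by
    rw [Rej, eDa]; exact pair_union_sdiff hdjbc
  have hdjab1 : ∀ x ∈ ({a, b} : Finset α), x ∉ C S q := by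
    intro x hx
    rcases Finset.mem_insert.1 hx with rfl | hx
    · exact haC
    · rw [Finset.mem_singleton] at hx; exact hx ▸ hbC
  have hdjbc2 : ∀ x ∈ ({b, c} : Finset α), x ∉ C S' q := by
    intro x hx
    rcases Finset.mem_insert.1 hx with rfl | hx
    · exact hbC'
    · rw [Finset.mem_singleton] at hx; exact hx ▸ hcC'
  have hRF1 : Rej C (C S q ∪ {a, b}) q = {a, b} := by
    rw [Rej, e1]; exact pair_union_sdiff hdjab1
  have hRF2 : Rej C (C S' q ∪ {b, c}) q = {b, c} := by
    rw [Rej, e1']; exact pair_union_sdiff hdjbc2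
  have hiaa1 := hIAA (C W q ∪ {a, b}) (C S q ∪ {a, b}) q ⟨a, by simp⟩ ⟨a, by simp⟩ hq1
    (by omega) (by rw [hRDc, hRF1])
  have hbDc : b ∉ C (C W q ∪ {a, b}) (q+1) := by
    intro h
    have hmem : b ∈ C (C W q ∪ {a, b}) (q+1) ∩ Rej C (C W q ∪ {a, b}) q :=
      Finset.mem_inter.2 ⟨h, by rw [hRDc]; simp⟩
    rw [hiaa1] at hmem
    have hmem2 := (Finset.mem_inter.1 hmem).1
    rw [e2] at hmem2
    rcases Finset.mem_insert.1 hmem2 with h' | h'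
    · exact hab h'.symm
    · exact hbC h'
  have hiaa2 := hIAA (C W q ∪ {b, c}) (C S' q ∪ {b, c}) q ⟨b, by simp⟩ ⟨b, by simp⟩ hq1
    (by omega) (by rw [hRDa, hRF2])
  have hcDa : c ∉ C (C W q ∪ {b, c}) (q+1) := by
    intro h
    have hmem : c ∈ C (C W q ∪ {b, c}) (q+1) ∩ Rej C (C W q ∪ {b, c}) q :=
      Finset.mem_inter.2 ⟨h, by rw [hRDa]; simp⟩
    rw [hiaa2] at hmem
    have hmem2 := (Finset.mem_inter.1 hmem).1
    rw [e2'] at hmem2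
    rcases Finset.mem_insert.1 hmem2 with h' | h'
    · exact hbc h'.symm
    · exact hcC' h'
  -- extract the alternative newly chosen from the canonical triple set
  have hWsne : (C W q ∪ ({a, b, c} : Finset α)).Nonempty := ⟨a, by simp⟩
  have hWscard : (C W q ∪ ({a, b, c} : Finset α)).card = q + 3 := by
    rw [Finset.card_union_of_disjoint (Finset.disjoint_left.2 fun x h1 h2 => hdjabc x h2 h1),
      hcW3]
    have h3 : ({a, b, c} : Finset α).card = 3 := by
      rw [Finset.card_insert_of_notMem (by simp [hab, hac]), Finset.card_pair hbc]
    omega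
  have hmonoWs := hMon (C W q ∪ {a, b, c}) q hWsne hq1 (by omega)
  rw [eWs] at hmonoWs
  have hcardWs1 : (C (C W q ∪ {a, b, c}) (q+1)).card = q + 1 := by
    rw [hCF _ (q+1) hWsne (by omega) hqn, hWscard]
    omega
  have hsd : (C (C W q ∪ {a, b, c}) (q+1) \ C W q).card = 1 := by
    rw [Finset.card_sdiff_of_subset hmonoWs, hcardWs1, hcW3]
    omega
  obtain ⟨x, hxeq⟩ := Finset.card_eq_one.1 hsd
  have hx : x ∈ C (C W q ∪ {a, b, c}) (q+1) ∧ x ∉ C W q :=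
    Finset.mem_sdiff.1 (by rw [hxeq]; exact Finset.mem_singleton_self x)
  have hxWs : x ∈ C W q ∪ ({a, b, c} : Finset α) :=
    (hC _ (q+1) hWsne (by omega) hqn).1 hx.1
  have hxabc : x ∈ ({a, b, c} : Finset α) := by
    rcases Finset.mem_union.1 hxWs with h | h
    · exact absurd h hx.2
    · exact h
  have hsubDc : C W q ∪ {a, b} ⊆ C W q ∪ {a, b, c} := Finset.union_subset_union_right hpab
  have hsubDa : C W q ∪ {b, c} ⊆ C W q ∪ {a, b, c} := Finset.union_subset_union_right hpbc
  have hsubDb : C W q ∪ {a, c} ⊆ C W q ∪ {a, b, c} := Finset.union_subset_union_right hpac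
  rcases Finset.mem_insert.1 hxabc with hxa | hx'
  · -- x = a : produce the witness for a ≻ c
    subst hxa
    have haDb1 : x ∈ C (C W q ∪ {x, c}) (q+1) :=
      choice_persist C hGS (by omega) hqn _ (C W q ∪ {x, b, c}) (C W q ∪ {x, c}) x rfl
        hsubDb (by simp) hx.1
    exact ⟨hac, C W q ∪ {x, c}, by simp, by simp, by rw [eDb]; exact haCW,
      by rw [eDb]; exact hcCW, haDb1⟩
  rcases Finset.mem_insert.1 hx' with hxb | hx''
  · -- x = b : contradiction
    subst hxb
    have : x ∈ C (C W q ∪ {a, x}) (q+1) :=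
      choice_persist C hGS (by omega) hqn _ (C W q ∪ {a, x, c}) (C W q ∪ {a, x}) x rfl
        hsubDc (by simp) hx.1
    exact absurd this hbDc
  · -- x = c : contradiction
    rw [Finset.mem_singleton] at hx''
    subst hx''
    have : x ∈ C (C W q ∪ {b, x}) (q+1) :=
      choice_persist C hGS (by omega) hqn _ (C W q ∪ {a, b, x}) (C W q ∪ {b, x}) x rfl
        hsubDa (by simp) hx.1
    exact absurd this hcDa


/-- Some linear order on a finite type (used as a dummy value). -/
noncomputable def someLinear [Nonempty α] : LinearOrder α :=
  LinearOrder.lift' (fun a => Fintype.equivFin α a) (Equiv.injective _)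

lemma rel_extension [Nonempty α] (C : Finset α → ℕ → Finset α) (hC : ValidRule C)
    (hCF : CapacityFilling C) (hGS : GrossSubstitutes C) (hMon : ChoiceMonotone C)
    (hIAA : IrrelevanceOfAcceptedAlternatives C) (q : ℕ) (hqn : q + 1 ≤ Fintype.card α) :
    ∃ L : LinearOrder α, ∀ (X : Finset α) (hX : X.Nonempty) (x : α), x ∈ X →
      (∀ b ∈ X, b ≠ x → PRel C q x b) → @Finset.max' α L X hX = x := by
  classical
  have hasym : ∀ a b, PRel C q a b → PRel C q b a → False := by
    intro a b h1 h2
    by_cases h : q = 0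
    · rw [PRel, if_pos h] at h1 h2
      exact rel0_asymm C hCF h1 h2
    · rw [PRel, if_neg h] at h1 h2
      exact relQ_asymm C hC hCF hGS hMon hIAA (by omega) hqn h1 h2
  have htrans : ∀ a b c, PRel C q a b → PRel C q b c → PRel C q a c := by
    intro a b c h1 h2
    by_cases h : q = 0
    · rw [PRel, if_pos h] at h1 h2 ⊢
      exact rel0_trans C hC hCF hGS h1 h2
    · rw [PRel, if_neg h] at h1 h2 ⊢
      exact relQ_trans C hC hCF hGS hMon hIAA (by omega) hqn h1 h2
  haveI hpo : IsPartialOrder α (fun x y => x = y ∨ PRel C q y x) :=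
    { refl := fun a => Or.inl rfl
      trans := by
        rintro a b c (rfl | h1) (rfl | h2)
        · exact Or.inl rfl
        · exact Or.inr h2
        · exact Or.inr h1
        · exact Or.inr (htrans c b a h2 h1)
      antisymm := by
        rintro a b h1 h2
        rcases h1 with rfl | h1
        · rfl
        · rcases h2 with h2 | h2
          · exact h2.symm
          · exact absurd h2 (fun h => hasym b a h1 h) }
  obtain ⟨s, hs, hrs⟩ := extend_partialOrder (fun x y => x = y ∨ PRel C q y x)
  haveI := hs
  letI L : LinearOrder α :=
    { le := s
      le_refl := fun a => refl_of s a
      le_trans := fun a b c => trans_of s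
      le_antisymm := fun a b => antisymm_of s
      le_total := fun a b => total_of s a b
      toDecidableLE := fun a b => Classical.dec _ }
  refine ⟨L, ?_⟩
  intro X hX x hxX hall
  apply le_antisymm
  · apply Finset.max'_le
    intro y hy
    by_cases hyx : y = x
    · subst hyx; exact le_refl y
    · exact hrs y x (Or.inr (hall y hy hyx))
  · exact Finset.le_max' X x hxX

lemma axioms_isLex [Nonempty α] (C : Finset α → ℕ → Finset α) (hC : ValidRule C)
    (hCF : CapacityFilling C) (hGS : GrossSubstitutes C) (hMon : ChoiceMonotone C)
    (hIAA : IrrelevanceOfAcceptedAlternatives C) : IsLex C := by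
  classical
  have hn1 : 1 ≤ Fintype.card α := Fintype.card_pos
  have hπex : ∀ q : ℕ, ∃ L : LinearOrder α, q + 1 ≤ Fintype.card α →
      ∀ (X : Finset α) (hX : X.Nonempty) (x : α), x ∈ X →
        (∀ b ∈ X, b ≠ x → PRel C q x b) → @Finset.max' α L X hX = x := by
    intro q
    by_cases h : q + 1 ≤ Fintype.card α
    · obtain ⟨L, hL⟩ := rel_extension C hC hCF hGS hMon hIAA q h
      exact ⟨L, fun _ => hL⟩
    · exact ⟨someLinear, fun hh => absurd hh h⟩
  choose π hπ using hπex
  refine ⟨π, ?_⟩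
  suffices hmain : ∀ q : ℕ, q ≤ Fintype.card α → ∀ S : Finset α, S.Nonempty → 1 ≤ q →
      C S q = lexChoice π S q by
    intro S q hS h1 h2
    exact hmain q h2 S hS h1
  intro q
  induction q with
  | zero => intro _ S _ h1; omega
  | succ q ih =>
    intro hqn S hS _
    have unfold1 : lexChoice π S (q+1) =
        if h : (S \ lexChoice π S q).Nonempty
          then insert (@Finset.max' α (π q) (S \ lexChoice π S q) h) (lexChoice π S q)
          else lexChoice π S q := rfl
    by_cases hq0 : q = 0
    · -- capacity one
      subst hq0
      have hS0 : S \ lexChoice π S 0 = S := by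
        rw [show lexChoice π S 0 = (∅ : Finset α) from rfl, Finset.sdiff_empty]
      have hS' : (S \ lexChoice π S 0).Nonempty := by rw [hS0]; exact hS
      rw [unfold1, dif_pos hS']
      have hcard : (C S 1).card = 1 := by
        have := hCF S 1 hS le_rfl hn1
        have hpos : 0 < S.card := Finset.card_pos.2 hS
        omega
      obtain ⟨x, hxeq⟩ := Finset.card_eq_one.1 hcard
      have hxC : x ∈ C S 1 := by rw [hxeq]; exact Finset.mem_singleton_self x
      have hxS : x ∈ S := (hC S 1 hS le_rfl hn1).1 hxC
      have hall : ∀ b ∈ S \ lexChoice π S 0, b ≠ x → PRel C 0 x b := by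
        intro b hb hbx
        rw [hS0] at hb
        rw [PRel, if_pos rfl]
        refine ⟨Ne.symm hbx, ?_⟩
        exact choice_persist C hGS le_rfl hn1 _ S {x, b} x rfl
          (Finset.insert_subset hxS (Finset.singleton_subset_iff.2 hb))
          (Finset.mem_insert_self _ _) hxC
      rw [hπ 0 (by omega) (S \ lexChoice π S 0) hS' x (by rw [hS0]; exact hxS) hall]
      rw [hxeq, show lexChoice π S 0 = (∅ : Finset α) from rfl, Finset.insert_empty]
    · -- inductive step
      have hq1 : 1 ≤ q := by omega
      have ihS : C S q = lexChoice π S q := ih (by omega) S hS hq1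
      rw [unfold1]
      by_cases hrej : (S \ lexChoice π S q).Nonempty
      · rw [dif_pos hrej]
        have hrej' : (S \ C S q).Nonempty := by rw [ihS]; exact hrej
        obtain ⟨d, hd⟩ := hrej'
        obtain ⟨hcq, hqlt⟩ := card_choice_of_rej C hC hCF hq1 (by omega) hS
          (Finset.mem_sdiff.1 hd).1 (Finset.mem_sdiff.1 hd).2
        have hmono := hMon S q hS hq1 (by omega)
        have hcard1 : (C S (q+1)).card = q + 1 := by
          rw [hCF S (q+1) hS (by omega) hqn]
          omega
        have hsd : (C S (q+1) \ C S q).card = 1 := by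
          rw [Finset.card_sdiff_of_subset hmono, hcard1, hcq]
          omega
        obtain ⟨x, hxeq⟩ := Finset.card_eq_one.1 hsd
        have hx : x ∈ C S (q+1) ∧ x ∉ C S q :=
          Finset.mem_sdiff.1 (by rw [hxeq]; exact Finset.mem_singleton_self x)
        have hxS : x ∈ S := (hC S (q+1) hS (by omega) hqn).1 hx.1
        have hall : ∀ b ∈ S \ lexChoice π S q, b ≠ x → PRel C q x b := by
          intro b hb hbx
          rw [← ihS] at hb
          rw [PRel, if_neg hq0]
          exact ⟨Ne.symm hbx, S, hxS, (Finset.mem_sdiff.1 hb).1, hx.2,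
            (Finset.mem_sdiff.1 hb).2, hx.1⟩
        have hxmem : x ∈ S \ lexChoice π S q := by
          rw [← ihS]
          exact Finset.mem_sdiff.2 ⟨hxS, hx.2⟩
        rw [hπ q hqn (S \ lexChoice π S q) hrej x hxmem hall, ← ihS]
        have hsub : insert x (C S q) ⊆ C S (q+1) := Finset.insert_subset hx.1 hmono
        exact (Finset.eq_of_subset_of_card_le hsub
          (by rw [hcard1, Finset.card_insert_of_notMem hx.2, hcq])).symm
      · rw [dif_neg hrej, ← ihS]
        rw [← ihS] at hrej
        have hCS : C S q = S := by
          apply Finset.Subset.antisymm (hC S q hS hq1 (by omega)).1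
          intro y hy
          by_contra hyn
          exact hrej ⟨y, Finset.mem_sdiff.2 ⟨hy, hyn⟩⟩
        have hq' : S.card ≤ q := by
          have := hCF S q hS hq1 (by omega)
          rw [hCS] at this
          omega
        have hCS1 : C S (q+1) = S := by
          apply Finset.eq_of_subset_of_card_le (hC S (q+1) hS (by omega) hqn).1
          rw [hCF S (q+1) hS (by omega) hqn]
          omega
        rw [hCS1, hCS]

theorem lex_iff_capacityFilling_grossSubstitutes_monotone_iaa [Nonempty α]
    (C : Finset α → ℕ → Finset α) (hC : ValidRule C) :
    IsLex C ↔
      (CapacityFilling C ∧ GrossSubstitutes C ∧ ChoiceMonotone C ∧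
        IrrelevanceOfAcceptedAlternatives C) := by
  constructor
  · rintro ⟨π, hπ⟩
    exact isLexFor_axioms C π hπ
  · rintro ⟨hCF, hGS, hMon, hIAA⟩
    exact axioms_isLex C hC hCF hGS hMon hIAA
end

section
/- Every lexicographic choice rule satisfies the capacity-wise weak axiom of revealed preference: if a is revealed preferred to b at capacity q, then a ≻_q b, and hence the revealed preference relation at each capacity is asymmetric. -/
open Finset

variable {α : Type*} [Fintype α] [DecidableEq α]

lemma lexChoice_key (π : ℕ → LinearOrder α) (k : ℕ) (S : Finset α) (a b : α)
    (ha' : a ∉ lexChoice π S k) (hbS : b ∈ S) (hb : b ∉ lexChoice π S (k + 1))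
    (ha : a ∈ lexChoice π S (k + 1)) : (π k).lt b a := by
  letI := π k
  rw [lexChoice] at ha hb
  set T := lexChoice π S k with hT
  by_cases h : (S \ T).Nonempty
  · simp only [h, dif_pos] at ha hb
    have hbT : b ∉ T := fun hbT => hb (Finset.mem_insert_of_mem hbT)
    have hbm : b ≠ (S \ T).max' h := fun he => hb (he ▸ Finset.mem_insert_self _ _)
    have ham : a = (S \ T).max' h := by
      rcases Finset.mem_insert.1 ha with h1 | h1
      · exact h1
      · exact absurd h1 ha'
    have : b ∈ S \ T := Finset.mem_sdiff.2 ⟨hbS, hbT⟩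
    exact lt_of_le_of_ne (ham ▸ Finset.le_max' _ _ this) (ham ▸ hbm)
  · simp only [h, dif_neg, not_false_iff] at ha
    exact absurd ha ha'

theorem lexChoice_cwarp [Nonempty α] (π : ℕ → LinearOrder α) :
    ∀ q : ℕ, 1 < q → q ≤ Fintype.card α → ∀ a b : α,
      RevealedPref (fun S k => lexChoice π S k) q a b →
        (π (q - 1)).lt b a ∧ ¬ RevealedPref (fun S k => lexChoice π S k) q b a := by
  intro q hq _ a b hab
  obtain ⟨S, _, ha1, hb1, ha2, hb2⟩ := hab
  obtain ⟨hbS, hb3⟩ := Finset.mem_sdiff.1 hb2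
  have hq1 : q - 1 + 1 = q := by omega
  have hba : (π (q - 1)).lt b a :=
    lexChoice_key π (q - 1) S a b ha1 hbS (hq1 ▸ hb3) (hq1 ▸ ha2)
  refine ⟨hba, ?_⟩
  rintro ⟨S', _, hb1', ha1', hb2', ha2'⟩
  obtain ⟨haS', ha3'⟩ := Finset.mem_sdiff.1 ha2'
  have hab' : (π (q - 1)).lt a b :=
    lexChoice_key π (q - 1) S' b a hb1' haS' (hq1 ▸ ha3') (hq1 ▸ hb2')
  letI := π (q - 1)
  exact absurd hab' (not_lt_of_gt hba)
end

section
/- A feasibility-constrained choice rule is capacity-constrained lexicographic if and only if it satisfies F-capacity-filling, monotonicity, and the capacity-wise strong axiom of revealed preference (CSARP). -/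
open Finset

variable {α : Type*} [Fintype α] [DecidableEq α]

/-- Downward-closedness of the family of feasible (nonempty) sets. -/
def DownwardClosed (F : Finset α → Prop) : Prop :=
  ∀ s t : Finset α, F s → t ⊆ s → t.Nonempty → F t

/-- Feasibility-constrained lexicographic choice: iteratively pick, for `i = 1, …, q`,
the `π i`-maximal remaining alternative whose addition keeps the chosen set feasible. -/
def lexChoiceF (F : Finset α → Prop) [DecidablePred F] (π : ℕ → LinearOrder α)
    (S : Finset α) : ℕ → Finset α
  | 0 => ∅
  | q + 1 =>
      let T := lexChoiceF F π S q
      let E := (S \ T).filter fun a => F (insert a T)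
      if h : E.Nonempty then insert (@Finset.max' α (π q) E h) T else T

/-- A feasibility-constrained choice rule chooses a nonempty feasible subset of `S`
of cardinality at most `q`. -/
def ValidRuleF (F : Finset α → Prop) (C : Finset α → ℕ → Finset α) : Prop :=
  ∀ S : Finset α, ∀ q : ℕ, S.Nonempty → 1 ≤ q → q ≤ Fintype.card α →
    C S q ⊆ S ∧ (C S q).Nonempty ∧ F (C S q) ∧ (C S q).card ≤ q

/-- `F`-capacity-filling: an available alternative is rejected only if the capacity is
full or choosing it would be infeasible. -/
def FCapacityFilling (F : Finset α → Prop) (C : Finset α → ℕ → Finset α) : Prop :=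
  ∀ S : Finset α, ∀ q : ℕ, S.Nonempty → 1 ≤ q → q ≤ Fintype.card α →
    ∀ a ∈ S, a ∉ C S q → (C S q).card = q ∨ ¬ F (insert a (C S q))

/-- `a` is revealed `F`-preferred to `b` at capacity `q`. -/
def RevealedPrefF (F : Finset α → Prop) (C : Finset α → ℕ → Finset α)
    (q : ℕ) (a b : α) : Prop :=
  ∃ S : Finset α, S.Nonempty ∧ a ∉ C S (q - 1) ∧ b ∉ C S (q - 1) ∧
    a ∈ C S q ∧ b ∈ S ∧ b ∉ C S q ∧ F (insert b (C S (q - 1)))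

/-- Capacity-wise strong axiom of revealed preference: each `R_q^F` is acyclic. -/
def CSARP (F : Finset α → Prop) (C : Finset α → ℕ → Finset α) : Prop :=
  ∀ q : ℕ, 1 ≤ q → q ≤ Fintype.card α →
    ∀ a : α, ¬ Relation.TransGen (RevealedPrefF F C q) a a

/-- The strict order of a linear order, with the instance path spelled out. -/
abbrev ltOf (L : LinearOrder α) : α → α → Prop :=
  @LT.lt α (@Preorder.toLT α (@PartialOrder.toPreorder α (@LinearOrder.toPartialOrder α L)))

/-- Any acyclic relation on a type extends to a linear order. -/
lemma exists_linext (r : α → α → Prop) (hacyc : ∀ a, ¬ Relation.TransGen r a a) :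
    ∃ L : LinearOrder α, ∀ a b : α, r a b → ltOf L a b := by
  classical
  haveI : IsPartialOrder α (Relation.ReflTransGen r) :=
    { refl := fun _ => Relation.ReflTransGen.refl
      trans := fun _ _ _ => Relation.ReflTransGen.trans
      antisymm := fun a b hab hba => by
        rcases Relation.reflTransGen_iff_eq_or_transGen.mp hab with h1 | h1
        · exact h1.symm
        rcases Relation.reflTransGen_iff_eq_or_transGen.mp hba with h2 | h2
        · exact h2
        exact absurd (h1.trans h2) (hacyc a) }
  obtain ⟨s, hs, hrs⟩ := extend_partialOrder (Relation.ReflTransGen r)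
  haveI := hs
  set t : α → α → Prop := fun a b => s a b ∧ a ≠ b with ht
  haveI hstrict : IsStrictTotalOrder α t :=
    { trichotomous := fun a b hab hba => by
        by_contra h
        rcases total_of s a b with h' | h'
        · exact hab ⟨h', h⟩
        · exact hba ⟨h', Ne.symm h⟩
      irrefl := fun a h => h.2 rfl
      trans := fun a b c h1 h2 => by
        refine ⟨_root_.trans h1.1 h2.1, fun hac => ?_⟩
        subst hac
        exact h1.2 (_root_.antisymm h1.1 h2.1) }
  letI : DecidableRel t := fun a b => Classical.dec _
  refine ⟨linearOrderOfSTO t, fun a b hr => ?_⟩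
  show t a b
  refine ⟨hrs a b (Relation.ReflTransGen.single hr), fun hab => ?_⟩
  exact hacyc b (Relation.TransGen.single (hab ▸ hr))

lemma lexF_succ (F : Finset α → Prop) [DecidablePred F] (π : ℕ → LinearOrder α)
    (S : Finset α) (q : ℕ) :
    lexChoiceF F π S (q + 1) =
      if h : ((S \ lexChoiceF F π S q).filter
          fun a => F (insert a (lexChoiceF F π S q))).Nonempty
      then insert (@Finset.max' α (π q)
          ((S \ lexChoiceF F π S q).filter fun a => F (insert a (lexChoiceF F π S q))) h)
          (lexChoiceF F π S q)
      else lexChoiceF F π S q := rfl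

lemma lexF_subset (F : Finset α → Prop) [DecidablePred F] (π : ℕ → LinearOrder α)
    (S : Finset α) : ∀ q : ℕ, lexChoiceF F π S q ⊆ S
  | 0 => by simp [lexChoiceF]
  | q + 1 => by
    letI := π q
    rw [lexF_succ]
    split_ifs with h
    · refine insert_subset ?_ (lexF_subset F π S q)
      exact (mem_sdiff.mp (mem_filter.mp (Finset.max'_mem _ h)).1).1
    · exact lexF_subset F π S q

lemma lexF_mono (F : Finset α → Prop) [DecidablePred F] (π : ℕ → LinearOrder α)
    (S : Finset α) (q : ℕ) : lexChoiceF F π S q ⊆ lexChoiceF F π S (q + 1) := by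
  rw [lexF_succ]
  split_ifs with h
  · exact subset_insert _ _
  · exact Subset.rfl

lemma lexF_card (F : Finset α → Prop) [DecidablePred F] (π : ℕ → LinearOrder α)
    (S : Finset α) : ∀ q : ℕ,
    (lexChoiceF F π S q).card = q ∨
      (((S \ lexChoiceF F π S q).filter fun a => F (insert a (lexChoiceF F π S q))) = ∅ ∧
        (lexChoiceF F π S q).card ≤ q)
  | 0 => Or.inl (by simp [lexChoiceF])
  | q + 1 => by
    letI := π q
    by_cases h : ((S \ lexChoiceF F π S q).filter
        fun a => F (insert a (lexChoiceF F π S q))).Nonempty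
    · left
      rw [lexF_succ, dif_pos h]
      have hnot : Finset.max' _ h ∉ lexChoiceF F π S q :=
        (mem_sdiff.mp (mem_filter.mp (Finset.max'_mem _ h)).1).2
      rw [card_insert_of_notMem hnot]
      rcases lexF_card F π S q with h1 | ⟨h1, _⟩
      · omega
      · exfalso; rw [h1] at h; exact Finset.not_nonempty_empty h
    · right
      rw [lexF_succ, dif_neg h]
      refine ⟨not_nonempty_iff_eq_empty.mp h, ?_⟩
      rcases lexF_card F π S q with h1 | ⟨_, h1⟩ <;> omega

/-- The key inductive step for the converse direction. -/
lemma lex_step (F : Finset α → Prop) [DecidablePred F] (hDC : DownwardClosed F)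
    (π : ℕ → LinearOrder α) (C : Finset α → ℕ → Finset α) (S : Finset α) (q : ℕ)
    (hS : S.Nonempty)
    (hTD : C S q ⊆ C S (q + 1)) (hDS : C S (q + 1) ⊆ S) (hDF : F (C S (q + 1)))
    (hDle : (C S (q + 1)).card ≤ q + 1)
    (hfillq : ∀ a ∈ S, a ∉ C S q → (C S q).card = q ∨ ¬ F (insert a (C S q)))
    (hfillq1 : ∀ a ∈ S, a ∉ C S (q + 1) →
      (C S (q + 1)).card = q + 1 ∨ ¬ F (insert a (C S (q + 1))))
    (hord : ∀ a b, RevealedPrefF F C (q + 1) a b → ltOf (π q) b a)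
    (hTq : C S q = lexChoiceF F π S q) :
    C S (q + 1) = lexChoiceF F π S (q + 1) := by
  letI := π q
  rw [lexF_succ, ← hTq]
  by_cases hne : ((S \ C S q).filter fun a => F (insert a (C S q))).Nonempty
  · rw [dif_pos hne]
    have hex := hne
    obtain ⟨a0, ha0⟩ := hex
    have ha0S : a0 ∈ S := (mem_sdiff.mp (mem_filter.mp ha0).1).1
    have ha0T : a0 ∉ C S q := (mem_sdiff.mp (mem_filter.mp ha0).1).2
    have ha0F : F (insert a0 (C S q)) := (mem_filter.mp ha0).2
    have hTcard : (C S q).card = q := by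
      rcases hfillq a0 ha0S ha0T with h | h
      · exact h
      · exact absurd ha0F h
    have hDne : C S (q + 1) ≠ C S q := by
      intro hEq
      rcases hfillq1 a0 ha0S (by rw [hEq]; exact ha0T) with h | h
      · rw [hEq, hTcard] at h; omega
      · rw [hEq] at h; exact absurd ha0F h
    have hlt : (C S q).card < (C S (q + 1)).card := by
      refine lt_of_le_of_ne (card_le_card hTD) (fun h => hDne ?_)
      exact (Finset.eq_of_subset_of_card_le hTD h.ge).symm
    have hsd : (C S (q + 1) \ C S q).card = 1 := by
      rw [card_sdiff_of_subset hTD]; omega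
    obtain ⟨d, hd⟩ := card_eq_one.mp hsd
    have hddiff : d ∈ C S (q + 1) \ C S q := hd ▸ mem_singleton_self d
    have hdD : d ∈ C S (q + 1) := (mem_sdiff.mp hddiff).1
    have hdT : d ∉ C S q := (mem_sdiff.mp hddiff).2
    have hDeq : C S (q + 1) = insert d (C S q) := by
      apply Subset.antisymm
      · intro x hx
        by_cases hxT : x ∈ C S q
        · exact mem_insert_of_mem hxT
        · have hx2 : x ∈ C S (q + 1) \ C S q := mem_sdiff.mpr ⟨hx, hxT⟩
          rw [hd, mem_singleton] at hx2
          rw [hx2]; exact mem_insert_self d (C S q)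
      · exact insert_subset hdD hTD
    have hdE : d ∈ (S \ C S q).filter fun a => F (insert a (C S q)) :=
      mem_filter.mpr ⟨mem_sdiff.mpr ⟨hDS hdD, hdT⟩, by rw [← hDeq]; exact hDF⟩
    have hmax : Finset.max' _ hne = d := by
      apply le_antisymm
      · apply Finset.max'_le
        intro b hb
        rcases eq_or_ne b d with rfl | hbd
        · exact le_refl b
        · have hbS := (mem_sdiff.mp (mem_filter.mp hb).1).1
          have hbT := (mem_sdiff.mp (mem_filter.mp hb).1).2
          have hbF := (mem_filter.mp hb).2
          have hbD : b ∉ C S (q + 1) := by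
            rw [hDeq]; simp only [mem_insert, not_or]; exact ⟨hbd, hbT⟩
          have hR : RevealedPrefF F C (q + 1) d b :=
            ⟨S, hS, hdT, hbT, hdD, hbS, hbD, hbF⟩
          exact le_of_lt (hord d b hR)
      · exact Finset.le_max' _ d hdE
    rw [hmax]
    exact hDeq
  · rw [dif_neg hne]
    apply Subset.antisymm _ hTD
    intro x hx
    by_contra hxT
    exact hne ⟨x, mem_filter.mpr ⟨mem_sdiff.mpr ⟨hDS hx, hxT⟩,
      hDC _ _ hDF (insert_subset hx hTD) (insert_nonempty _ _)⟩⟩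

theorem feasible_lex_iff [Nonempty α] (F : Finset α → Prop) [DecidablePred F]
    (hDC : DownwardClosed F) (hsing : ∀ a : α, F {a})
    (C : Finset α → ℕ → Finset α) (h0 : ∀ S : Finset α, C S 0 = ∅)
    (hC : ValidRuleF F C) :
    (∃ π : ℕ → LinearOrder α, ∀ S : Finset α, ∀ q : ℕ,
        S.Nonempty → 1 ≤ q → q ≤ Fintype.card α → C S q = lexChoiceF F π S q) ↔
      (FCapacityFilling F C ∧ ChoiceMonotone C ∧ CSARP F C) := by
  classical
  constructor
  · rintro ⟨π, hπ⟩
    refine ⟨?_, ?_, ?_⟩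
    · -- F-capacity-filling
      intro S q hS h1 h2 a haS haC
      rw [hπ S q hS h1 h2] at haC ⊢
      rcases lexF_card F π S q with h | ⟨h, _⟩
      · exact Or.inl h
      · right
        intro hF
        have : a ∈ (S \ lexChoiceF F π S q).filter
            fun b => F (insert b (lexChoiceF F π S q)) :=
          mem_filter.mpr ⟨mem_sdiff.mpr ⟨haS, haC⟩, hF⟩
        rw [h] at this
        exact absurd this (notMem_empty a)
    · -- monotonicity
      intro S q hS h1 h2
      rw [hπ S q hS h1 h2.le, hπ S (q + 1) hS (by omega) h2]
      exact lexF_mono F π S q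
    · -- CSARP
      intro q hq1 hq2 a
      obtain ⟨k, rfl⟩ : ∃ k, q = k + 1 := ⟨q - 1, (Nat.succ_pred_eq_of_pos hq1).symm⟩
      letI := π k
      have key : ∀ x y, RevealedPrefF F C (k + 1) x y → y < x := by
        rintro x y ⟨S, hS, hxT, hyT, hxD, hyS, hyD, hFy⟩
        have hT : C S k = lexChoiceF F π S k := by
          rcases Nat.eq_zero_or_pos k with rfl | hk
          · rw [h0]; rfl
          · exact hπ S k hS hk (by omega)
        have hxT' : x ∉ C S k := hxT
        have hyT' : y ∉ C S k := hyT
        have hFy' : F (insert y (C S k)) := hFy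
        rw [hT] at hxT' hyT' hFy'
        have hD : C S (k + 1) = lexChoiceF F π S (k + 1) := hπ S (k + 1) hS (by omega) hq2
        rw [hD, lexF_succ] at hxD hyD
        by_cases hne : ((S \ lexChoiceF F π S k).filter
            fun b => F (insert b (lexChoiceF F π S k))).Nonempty
        · rw [dif_pos hne] at hxD hyD
          have hx : x = Finset.max' _ hne := by
            rcases mem_insert.mp hxD with h | h
            · exact h
            · exact absurd h hxT'
          have hyE : y ∈ (S \ lexChoiceF F π S k).filter
              fun b => F (insert b (lexChoiceF F π S k)) :=
            mem_filter.mpr ⟨mem_sdiff.mpr ⟨hyS, hyT'⟩, hFy'⟩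
          have hle : y ≤ Finset.max' _ hne := Finset.le_max' _ y hyE
          have hne2 : y ≠ Finset.max' _ hne := by
            intro h
            exact hyD (h ▸ mem_insert_self _ _)
          rw [hx]
          exact lt_of_le_of_ne hle hne2
        · rw [dif_neg hne] at hxD
          exact absurd hxD hxT'
      intro hcyc
      have htr : Transitive (fun x y : α => y < x) := fun x y z h1 h2 => lt_trans h2 h1
      have := Relation.TransGen.mono key a a hcyc
      rw [@Relation.transGen_eq_self α (fun x y : α => y < x) ⟨htr⟩] at this
      exact lt_irrefl a this
  · rintro ⟨hFill, hMon, hAcyc⟩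
    have hext : ∀ q : ℕ, ∃ L : LinearOrder α, q + 1 ≤ Fintype.card α →
        ∀ a b, RevealedPrefF F C (q + 1) a b → ltOf L b a := by
      intro q
      by_cases h : q + 1 ≤ Fintype.card α
      · have hac : ∀ a, ¬ Relation.TransGen (Function.swap (RevealedPrefF F C (q + 1))) a a := by
          intro a ha
          exact hAcyc (q + 1) (Nat.succ_le_succ (Nat.zero_le q)) h a
            (Relation.transGen_swap.mpr ha)
        obtain ⟨L, hL⟩ := exists_linext _ hac
        exact ⟨L, fun _ a b hab => hL b a hab⟩
      · exact ⟨LinearOrder.lift' (Fintype.equivFin α) (Fintype.equivFin α).injective,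
          fun h' => absurd h' h⟩
    choose π hπ using hext
    suffices h : ∀ q : ℕ, q ≤ Fintype.card α → ∀ S : Finset α, S.Nonempty →
        C S q = lexChoiceF F π S q by
      exact ⟨π, fun S q hS _ hq => h q hq S hS⟩
    intro q
    induction q with
    | zero => intro _ S _; rw [h0]; rfl
    | succ q ih =>
      intro hq S hS
      have hTq : C S q = lexChoiceF F π S q := ih (by omega) S hS
      have hTD : C S q ⊆ C S (q + 1) := by
        rcases Nat.eq_zero_or_pos q with rfl | hk
        · rw [h0]; exact empty_subset _
        · exact hMon S q hS hk (by omega)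
      have hD := hC S (q + 1) hS (by omega) hq
      have hfillq : ∀ a ∈ S, a ∉ C S q → (C S q).card = q ∨ ¬ F (insert a (C S q)) := by
        rcases Nat.eq_zero_or_pos q with rfl | hk
        · intro a _ _
          left; rw [h0]; exact card_empty
        · exact hFill S q hS hk (by omega)
      exact lex_step F hDC π C S q hS hTD hD.1 hD.2.2.1 hD.2.2.2 hfillq
        (hFill S (q + 1) hS (by omega) hq) (hπ q hq) hTq
end

section
/- For a feasibility-constrained choice rule that is lexicographic for (≻₁,...,≻ₙ): for each capacity q, if a is revealed F-preferred to b at q (i.e., a R_q^F b), then a ≻_q b; consequently each relation R_q^F is acyclic. -/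
open Finset

variable {α : Type*} [Fintype α] [DecidableEq α]

theorem feasible_lex_csarp [Nonempty α] (F : Finset α → Prop) [DecidablePred F]
    (hDC : DownwardClosed F) (hsing : ∀ a : α, F {a}) (π : ℕ → LinearOrder α) :
    ∀ q : ℕ, 1 ≤ q → q ≤ Fintype.card α →
      (∀ a b : α, RevealedPrefF F (fun S k => lexChoiceF F π S k) q a b →
          (π (q - 1)).lt b a) ∧
        ∀ a : α, ¬ Relation.TransGen
          (RevealedPrefF F (fun S k => lexChoiceF F π S k) q) a a := by
  intro q hq hqc
  obtain ⟨k, rfl⟩ : ∃ k, q = k + 1 := ⟨q - 1, (Nat.succ_pred_eq_of_pos hq).symm⟩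
  have key : ∀ a b : α, RevealedPrefF F (fun S k => lexChoiceF F π S k) (k + 1) a b →
      (π (k + 1 - 1)).lt b a := by
    intro a b hab
    obtain ⟨S, hS, haT, hbT, haC, hbS, hbC, hFb⟩ := hab
    simp only [Nat.add_sub_cancel] at haT hbT hFb ⊢
    set T := lexChoiceF F π S k with hT
    set E := (S \ T).filter (fun a => F (insert a T)) with hE
    have hstep : lexChoiceF F π S (k + 1) =
        if h : E.Nonempty then insert (@Finset.max' α (π k) E h) T else T := rfl
    have hbE : b ∈ E := by
      rw [hE, Finset.mem_filter, Finset.mem_sdiff]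
      exact ⟨⟨hbS, hbT⟩, hFb⟩
    have hEne : E.Nonempty := ⟨b, hbE⟩
    change a ∈ lexChoiceF F π S (k + 1) at haC
    change b ∉ lexChoiceF F π S (k + 1) at hbC
    rw [hstep, dif_pos hEne] at haC hbC
    have ha : a = @Finset.max' α (π k) E hEne := by
      rcases Finset.mem_insert.mp haC with h | h
      · exact h
      · exact absurd h haT
    have hne : b ≠ a := fun h => hbC (h ▸ haC)
    have hle : (π k).le b (@Finset.max' α (π k) E hEne) := @Finset.le_max' α (π k) E b hbE
    rw [← ha] at hle
    exact @lt_of_le_of_ne α (π k).toPartialOrder b a hle hne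
  refine ⟨key, ?_⟩
  intro a hcyc
  have htg : Relation.TransGen (fun x y => (π (k + 1 - 1)).lt y x) a a :=
    Relation.TransGen.mono key _ _ hcyc
  have htrans : Transitive (fun x y : α => (π (k + 1 - 1)).lt y x) :=
    fun x y z h1 h2 => @lt_trans α (π (k + 1 - 1)).toPartialOrder.toPreorder z y x h2 h1
  rw [(haveI : IsTrans α (fun x y : α => (π (k + 1 - 1)).lt y x) := ⟨htrans⟩; Relation.transGen_eq_self)] at htg
  exact @lt_irrefl α (π (k + 1 - 1)).toPartialOrder.toPreorder a htg
end
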